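/- arXiv:1406.4384 — 6 statements merged into one kernel-verified Lean document; each statement's English description precedes it below -/
import Mathlib

section
/- Let f : X → C be a colouring with C finite and let β = (⟨f_α⟩_α, ⟨g_α⟩_α) be a lifted colour that is in the range of the lifted colouring F : P(X) → 2^C × 2^C. Then β is achieved by exactly one subset of X if and only if for every colour α with f⁻¹{α} nonempty, f_α = false or g_α = false. -/
/-!
If some colour `α` occurs both inside and outside `A`, swapping an inside point of colour `α`
with an outside one gives a different set with the same lifted colour. Conversely, if no colour
occurs on both sides, every `A` with lifted colour `β` is the union of the colour classes `α`
with `β.1 α`, so it is determined by `β`.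
-/

/-- The lifted colouring: `A ⊆ X` is sent to the pair recording, for each colour `α`,
whether `A` contains an element of colour `α` and whether `X \ A` does. -/
def Lift {X C : Type*} (f : X → C) (A : Set X) : (C → Prop) × (C → Prop) :=
  (fun α => ∃ x ∈ A, f x = α, fun α => ∃ x ∈ Aᶜ, f x = α)

section

variable {X C : Type*} (f : X → C)

theorem lift_image_equiv (σ : X ≃ X) (A : Set X) : Lift f (σ '' A) = Lift (f ∘ σ) A := by
  simp only [Lift, ← Set.image_compl_eq σ.bijective, Set.exists_mem_image, Function.comp_apply]

theorem comp_swap_eq_self [DecidableEq X] {a b : X} (hab : f a = f b) :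
    f ∘ Equiv.swap a b = f := by
  rw [Equiv.comp_swap_eq_update, hab, Function.update_eq_self, ← hab, Function.update_eq_self]

theorem lift_image_swap [DecidableEq X] {a b : X} (hab : f a = f b) (A : Set X) :
    Lift f (Equiv.swap a b '' A) = Lift f A := by
  rw [lift_image_equiv, comp_swap_eq_self f hab]

theorem eq_preimage_of_lift_eq {β : (C → Prop) × (C → Prop)}
    (hβ : ∀ α : C, (f ⁻¹' {α}).Nonempty → (¬ β.1 α ∨ ¬ β.2 α)) {A : Set X}
    (hA : Lift f A = β) : A = f ⁻¹' {α | β.1 α} := by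
  subst hA
  ext x
  refine ⟨fun hx => ⟨x, hx, rfl⟩, fun hx => ?_⟩
  by_contra hxA
  exact (hβ (f x) ⟨x, rfl⟩).elim (· hx) (· ⟨x, hxA, rfl⟩)

end

theorem stmt9_general {X C : Type*} (f : X → C) (β : (C → Prop) × (C → Prop))
    (hβ : ∃ A : Set X, Lift f A = β) :
    (∃! A : Set X, Lift f A = β) ↔
      ∀ α : C, (f ⁻¹' {α}).Nonempty → (¬ β.1 α ∨ ¬ β.2 α) := by
  classical
  constructor
  · rintro ⟨A, rfl, huniq⟩ α -
    by_contra! ⟨⟨a, ha, rfl⟩, ⟨b, hb, hab⟩⟩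
    have hswap : Equiv.swap a b '' A = A := huniq _ (lift_image_swap f hab.symm A)
    exact hb (hswap ▸ ⟨a, ha, Equiv.swap_apply_left a b⟩)
  · intro h
    obtain ⟨A, hA⟩ := hβ
    exact ⟨A, hA, fun B hB => (eq_preimage_of_lift_eq f h hB).trans
      (eq_preimage_of_lift_eq f h hA).symm⟩

/-- A lifted colour `β` in the range of the lifted colouring is achieved by exactly one
subset of `X` iff for every colour `α` with nonempty fibre, one of the two components
of `β` at `α` is false. -/
theorem stmt9 {X C : Type*} [Finite C] (f : X → C) (β : (C → Prop) × (C → Prop))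
    (hβ : ∃ A : Set X, Lift f A = β) :
    (∃! A : Set X, Lift f A = β) ↔
      ∀ α : C, (f ⁻¹' {α}).Nonempty → (¬ β.1 α ∨ ¬ β.2 α) :=
  stmt9_general f β hβ
end

section
/- Let f : X → C be a colouring with C finite, and let β = (⟨f_α⟩, ⟨g_α⟩) be a lifted colour in the range of the lifted colouring F : P(X) → 2^C × 2^C. If there exists a colour α with |f⁻¹{α}| ≥ N and f_α = g_α = true, then at least N distinct subsets of X receive lifted colour β. -/
/-!
Changing a set `A` only inside the fibre `f⁻¹{α}` keeps its lifted colour, provided the new set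
still meets the fibre and still misses a point of it. Since `A` and `Aᶜ` both meet the fibre,
it has two points, so replacing `A ∩ f⁻¹{α}` by any singleton `{x}` of the fibre is such a
change, and distinct `x` give distinct sets.
-/

namespace Lift

variable {X C : Type*} {f : X → C}

theorem eq_of_mem_iff_off_fibre {A B : Set X} {α : C}
    (hAB : ∀ y, f y ≠ α → (y ∈ B ↔ y ∈ A))
    (hB : (Lift f B).1 α ∧ (Lift f B).2 α) (hA : (Lift f A).1 α ∧ (Lift f A).2 α) :
    Lift f B = Lift f A := by
  have hexists_iff : ∀ (S T : Set X), (∀ y, f y ≠ α → (y ∈ S ↔ y ∈ T)) → ∀ γ, γ ≠ α →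
      ((∃ y ∈ S, f y = γ) ↔ ∃ y ∈ T, f y = γ) := by
    intro S T hST γ hγ
    exact exists_congr fun y => and_congr_left fun hy => hST y (hy ▸ hγ)
  ext γ <;> by_cases hγ : γ = α
  · subst hγ; exact iff_of_true hB.1 hA.1
  · exact hexists_iff B A hAB γ hγ
  · subst hγ; exact iff_of_true hB.2 hA.2
  · exact hexists_iff Bᶜ Aᶜ (fun y hy => not_congr (hAB y hy)) γ hγ

theorem insert_diff_fibre_eq {A : Set X} {α : C} {x : X} (hx : f x = α)
    (hA : (Lift f A).1 α ∧ (Lift f A).2 α) :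
    Lift f (insert x (A \ f ⁻¹' {α})) = Lift f A := by
  have ⟨⟨a, ha, hfa⟩, ⟨b, hb, hfb⟩⟩ := hA
  obtain ⟨z, hz, hzx⟩ : ∃ z, f z = α ∧ z ≠ x := by
    by_cases hax : a = x
    · exact ⟨b, hfb, fun hbx => hb (hbx.trans hax.symm ▸ ha)⟩
    · exact ⟨a, hfa, hax⟩
  refine eq_of_mem_iff_off_fibre (fun y hy => ?_) ⟨⟨x, Set.mem_insert x _, hx⟩, ⟨z, ?_, hz⟩⟩ hA
  · have hyx : y ≠ x := fun h => hy (h ▸ hx)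
    simp [hyx, hy]
  · simp [hzx, hz]

end Lift

theorem stmt10_general {X C : Type*} (f : X → C) (N : ℕ)
    (β : (C → Prop) × (C → Prop)) (hβ : ∃ A : Set X, Lift f A = β)
    (h : ∃ α : C, (N : Cardinal) ≤ Cardinal.mk (f ⁻¹' {α}) ∧ β.1 α ∧ β.2 α) :
    (N : Cardinal) ≤ Cardinal.mk {A : Set X // Lift f A = β} := by
  obtain ⟨A, rfl⟩ := hβ
  obtain ⟨α, hN, hα⟩ := h
  refine hN.trans (Cardinal.mk_le_of_injective (f := fun x : f ⁻¹' {α} =>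
    ⟨_, Lift.insert_diff_fibre_eq x.2 hα⟩) ?_)
  intro x y hxy
  exact Subtype.ext ((Set.insert_inj fun h => h.2 x.2).1 (congrArg Subtype.val hxy))

/-- If a lifted colour `β` is in the range of the lifted colouring and some colour `α`
has fibre of size at least `N` with both components of `β` at `α` true, then at least
`N` distinct subsets of `X` receive the lifted colour `β`. -/
theorem stmt10 {X C : Type*} [Finite C] (f : X → C) (N : ℕ)
    (β : (C → Prop) × (C → Prop)) (hβ : ∃ A : Set X, Lift f A = β)
    (h : ∃ α : C, (N : Cardinal) ≤ Cardinal.mk (f ⁻¹' {α}) ∧ β.1 α ∧ β.2 α) :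
    (N : Cardinal) ≤ Cardinal.mk {A : Set X // Lift f A = β} :=
  stmt10_general f N β hβ h
end

section
/- Let f : X → C and g : Y → C be colourings into a finite colour set C that are N-similar for some N ≥ 2, and let F : P(X) → 2^C × 2^C and G : P(Y) → 2^C × 2^C be the respective lifted colourings. Then F and G are N-similar. -/
/-!
A set `A ⊆ X` is determined by its traces `A ∩ f⁻¹{α}` on the colour classes, and `Lift f A = P`
constrains each trace separately: whether it is nonempty is prescribed by `P.1 α`, whether its
complement in the class is nonempty by `P.2 α`. So the fibre of `Lift f` over `P` is a product,
over the colours, of sets of admissible traces, and the same holds for `g`.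

Suppose this product is nonempty with fewer than `N` elements. A factor in which both the trace
and its complement must be nonempty contains all singletons, so its colour class has fewer than
`N` elements and, by similarity, is in bijection with that of `g`. Every other factor has at most
one element, and whether it is empty depends only on whether the colour class is empty, a
singleton or larger, which similarity preserves because `N ≥ 2`. Hence the fibres of `Lift f`
and `Lift g` over `P` are in bijection; the empty case only needs the last observation.
-/

/-- A colour `α` is `m`-special w.r.t. `f` if the fibre `f⁻¹{α}` has exactly `m` elements. -/
def IsSpecial {X C : Type*} (f : X → C) (α : C) (m : ℕ) : Prop :=
  (f ⁻¹' {α}).Finite ∧ (f ⁻¹' {α}).ncard = m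

/-- Colourings `f` and `g` are `J`-similar if for all `m < J` and all colours `α`,
`α` is `m`-special w.r.t. `f` iff it is `m`-special w.r.t. `g`. -/
def JSimilar {X Y C : Type*} (f : X → C) (g : Y → C) (J : ℕ) : Prop :=
  ∀ m < J, ∀ α : C, IsSpecial f α m ↔ IsSpecial g α m

open Set Function

namespace Colouring

variable {T T' : Type*}

/-- The traces `A ∩ f⁻¹{α}` (read inside the colour class `T = f⁻¹{α}`) of the sets `A` with
`Lift f A = P`, where `p = P.1 α` and `q = P.2 α`. -/
def choices (T : Type*) (p q : Prop) : Set (Set T) :=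
  {s | (p ↔ s.Nonempty) ∧ (q ↔ sᶜ.Nonempty)}

def choicesCongr (e : T ≃ T') (p q : Prop) : choices T p q ≃ choices T' p q :=
  (Equiv.Set.congr e).subtypeEquiv fun s => by
    simp only [choices, mem_ofPred_eq, Equiv.Set.congr_apply, ← e.image_compl, image_nonempty]

lemma choices_subsingleton {p q : Prop} (h : ¬(p ∧ q)) : (choices T p q).Subsingleton := by
  rintro s ⟨hsp, hsq⟩ t ⟨htp, htq⟩
  by_cases hp : p
  · have hq : ¬q := fun hq => h ⟨hp, hq⟩
    rw [← compl_inj_iff, not_nonempty_iff_eq_empty.mp (hsq.not.mp hq),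
      not_nonempty_iff_eq_empty.mp (htq.not.mp hq)]
  · rw [not_nonempty_iff_eq_empty.mp (hsp.not.mp hp), not_nonempty_iff_eq_empty.mp (htp.not.mp hp)]

lemma choices_nonempty_iff [Nontrivial T] {p q : Prop} : (choices T p q).Nonempty ↔ p ∨ q := by
  constructor
  · rintro ⟨s, hsp, hsq⟩
    by_contra! h
    obtain ⟨x⟩ := ‹Nontrivial T›.to_nonempty
    by_cases hx : x ∈ s
    · exact h.1 (hsp.mpr ⟨x, hx⟩)
    · exact h.2 (hsq.mpr ⟨x, hx⟩)
  · intro h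
    by_cases hp : p <;> by_cases hq : q
    · obtain ⟨x, y, hxy⟩ := exists_pair_ne T
      exact ⟨{x}, iff_of_true hp (singleton_nonempty x), iff_of_true hq ⟨y, hxy.symm⟩⟩
    · exact ⟨univ, iff_of_true hp univ_nonempty, iff_of_false hq (by simp)⟩
    · exact ⟨∅, iff_of_false hp (by simp), iff_of_true hq (by simp)⟩
    · exact (h.elim hp hq).elim

lemma nontrivial_of_choices_nonempty {p q : Prop} (hp : p) (hq : q)
    (h : (choices T p q).Nonempty) : Nontrivial T := by
  obtain ⟨s, hsp, hsq⟩ := h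
  obtain ⟨x, hx⟩ := hsp.mp hp
  obtain ⟨y, hy⟩ := hsq.mp hq
  exact ⟨⟨x, y, fun hxy => hy (hxy ▸ hx)⟩⟩

def singletonChoices [Nontrivial T] {p q : Prop} (hp : p) (hq : q) : T ↪ choices T p q where
  toFun x := ⟨{x}, iff_of_true hp (singleton_nonempty x),
    iff_of_true hq (exists_ne x)⟩
  inj' _ _ h := singleton_injective (congrArg Subtype.val h)

lemma nontrivial_of_not_finite_card_lt {N : ℕ} (hN : 2 ≤ N)
    (hT : ¬(Finite T ∧ Nat.card T < N)) : Nontrivial T := by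
  by_contra hT'
  rw [not_nontrivial_iff_subsingleton] at hT'
  exact hT ⟨inferInstance, (Finite.card_le_one_iff_subsingleton.mpr hT').trans_lt hN⟩

variable {X C : Type*}

def setEquivPiFiber (f : X → C) : Set X ≃ Π α, Set (f ⁻¹' {α}) where
  toFun A _ := Subtype.val ⁻¹' A
  invFun s := {x | ⟨x, rfl⟩ ∈ s (f x)}
  left_inv _ := rfl
  right_inv s := by
    funext α
    ext ⟨x, hx⟩
    obtain rfl : f x = α := hx
    rfl

lemma lift_eq_iff (f : X → C) (A : Set X) (P : (C → Prop) × (C → Prop)) :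
    Lift f A = P ↔ ∀ α, setEquivPiFiber f A α ∈ choices (f ⁻¹' {α}) (P.1 α) (P.2 α) := by
  simp only [Lift, Prod.ext_iff, funext_iff, eq_iff_iff, ← forall_and]
  refine forall_congr' fun α => ?_
  have trace_nonempty (B : Set X) :
      (Subtype.val ⁻¹' B : Set (f ⁻¹' {α})).Nonempty ↔ ∃ x ∈ B, f x = α :=
    ⟨fun ⟨x, hx⟩ => ⟨x, hx, x.2⟩, fun ⟨x, hx, hfx⟩ => ⟨⟨x, hfx⟩, hx⟩⟩
  simp only [choices, setEquivPiFiber, Equiv.coe_fn_mk, mem_ofPred_eq, ← preimage_compl,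
    trace_nonempty, iff_comm]

def liftFiberEquiv (f : X → C) (P : (C → Prop) × (C → Prop)) :
    Lift f ⁻¹' {P} ≃ Π α, choices (f ⁻¹' {α}) (P.1 α) (P.2 α) :=
  ((setEquivPiFiber f).subtypeEquiv fun A => lift_eq_iff f A P).trans Equiv.subtypePiEquivPi

def CardAgreeBelow (N : ℕ) (T T' : Type*) : Prop :=
  ∀ m < N, (Finite T ∧ Nat.card T = m) ↔ (Finite T' ∧ Nat.card T' = m)

lemma isSpecial_iff (f : X → C) (α : C) (m : ℕ) :
    IsSpecial f α m ↔ Finite (f ⁻¹' {α}) ∧ Nat.card (f ⁻¹' {α}) = m := by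
  rw [finite_coe_iff, Nat.card_coe_set_eq, IsSpecial]

lemma jSimilar_iff_forall_cardAgreeBelow {Y : Type*} (f : X → C) (g : Y → C) (N : ℕ) :
    JSimilar f g N ↔ ∀ α, CardAgreeBelow N (f ⁻¹' {α}) (g ⁻¹' {α}) := by
  simp only [JSimilar, CardAgreeBelow, isSpecial_iff]
  exact ⟨fun h α m hm => h m hm α, fun h m hm α => h α m hm⟩

namespace CardAgreeBelow

variable {N : ℕ}

lemma symm (h : CardAgreeBelow N T T') : CardAgreeBelow N T' T :=
  fun m hm => (h m hm).symm

lemma congr {T₁ T₂ : Type*} (h : CardAgreeBelow N T T') (e₁ : T ≃ T₁) (e₂ : T' ≃ T₂) :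
    CardAgreeBelow N T₁ T₂ := fun m hm => by
  rw [← e₁.finite_iff, ← e₂.finite_iff, ← Nat.card_congr e₁, ← Nat.card_congr e₂]
  exact h m hm

lemma finite_card_lt (h : CardAgreeBelow N T T') (hT : Finite T ∧ Nat.card T < N) :
    Finite T' ∧ Nat.card T' < N := by
  obtain ⟨hT', hcard⟩ := (h _ hT.2).mp ⟨hT.1, rfl⟩
  exact ⟨hT', hcard ▸ hT.2⟩

lemma nonempty_equiv (h : CardAgreeBelow N T T') [Finite T] (hlt : Nat.card T < N) :
    Nonempty (T ≃ T') := by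
  obtain ⟨_, hcard⟩ := (h _ hlt).mp ⟨‹_›, rfl⟩
  exact Finite.card_eq.mp hcard.symm

lemma choices_nonempty_iff (hN : 2 ≤ N) (h : CardAgreeBelow N T T') (p q : Prop) :
    (choices T p q).Nonempty ↔ (choices T' p q).Nonempty := by
  by_cases hT : Finite T ∧ Nat.card T < N
  · obtain ⟨_, hlt⟩ := hT
    obtain ⟨e⟩ := h.nonempty_equiv hlt
    simpa only [nonempty_coe_sort] using (choicesCongr e p q).nonempty_congr
  · have := nontrivial_of_not_finite_card_lt hN hT
    have := nontrivial_of_not_finite_card_lt hN (mt h.symm.finite_card_lt hT)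
    rw [Colouring.choices_nonempty_iff, Colouring.choices_nonempty_iff]

lemma nonempty_choices_equiv (hN : 2 ≤ N) (h : CardAgreeBelow N T T') {p q : Prop}
    (hpq : ¬(p ∧ q) ∨ (Finite T ∧ Nat.card T < N)) :
    Nonempty (choices T p q ≃ choices T' p q) := by
  rcases hpq with hpq | ⟨_, hlt⟩
  · have := (choices_subsingleton (T := T) hpq).coe_sort
    have := (choices_subsingleton (T := T') hpq).coe_sort
    have hne := h.choices_nonempty_iff hN p q
    simp only [← nonempty_coe_sort] at hne
    exact ⟨equivOfSubsingletonOfSubsingleton (fun s => (hne.mp ⟨s⟩).some)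
      (fun t => (hne.mpr ⟨t⟩).some)⟩
  · obtain ⟨e⟩ := h.nonempty_equiv hlt
    exact ⟨choicesCongr e p q⟩

lemma finite_card_pi_choices {ι : Type*} {T T' : ι → Type*} (hN : 2 ≤ N)
    (h : ∀ i, CardAgreeBelow N (T i) (T' i)) {p q : ι → Prop} {m : ℕ} (hm : m < N)
    (hT : Finite (Π i, choices (T i) (p i) (q i)) ∧
      Nat.card (Π i, choices (T i) (p i) (q i)) = m) :
    Finite (Π i, choices (T' i) (p i) (q i)) ∧
      Nat.card (Π i, choices (T' i) (p i) (q i)) = m := by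
  classical
  obtain ⟨_, rfl⟩ := hT
  rcases isEmpty_or_nonempty (Π i, choices (T i) (p i) (q i)) with hempty | hne
  · obtain ⟨i, hi⟩ := isEmpty_pi.mp hempty
    have : IsEmpty (choices (T' i) (p i) (q i)) := by
      rw [← not_nonempty_iff, nonempty_coe_sort, ← (h i).choices_nonempty_iff hN,
        ← nonempty_coe_sort, not_nonempty_iff]
      exact hi
    have : IsEmpty (Π i, choices (T' i) (p i) (q i)) := isEmpty_pi.mpr ⟨i, this⟩
    exact ⟨inferInstance, by simp only [Nat.card_of_isEmpty]⟩
  · obtain ⟨x⟩ := hne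
    have hsmall (i : ι) : ¬(p i ∧ q i) ∨ (Finite (T i) ∧ Nat.card (T i) < N) := by
      refine or_iff_not_imp_left.mpr fun hpq => ?_
      rw [not_not] at hpq
      have := nontrivial_of_choices_nonempty hpq.1 hpq.2 ⟨_, (x i).2⟩
      have hinj := (update_injective x i).comp (singletonChoices (T := T i) hpq.1 hpq.2).injective
      exact ⟨Finite.of_injective _ hinj, (Nat.card_le_card_of_injective _ hinj).trans_lt hm⟩
    let e := Equiv.piCongrRight fun i => ((h i).nonempty_choices_equiv hN (hsmall i)).some
    exact ⟨Finite.of_equiv _ e, (Nat.card_congr e).symm⟩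

lemma pi_choices {ι : Type*} {T T' : ι → Type*} (hN : 2 ≤ N)
    (h : ∀ i, CardAgreeBelow N (T i) (T' i)) (p q : ι → Prop) :
    CardAgreeBelow N (Π i, choices (T i) (p i) (q i)) (Π i, choices (T' i) (p i) (q i)) :=
  fun _ hm =>
    ⟨finite_card_pi_choices hN h hm, finite_card_pi_choices hN (fun i => (h i).symm) hm⟩

end CardAgreeBelow

end Colouring

theorem stmt11_general {X Y C : Type*} (f : X → C) (g : Y → C) (N : ℕ)
    (hN : 2 ≤ N) (hsim : JSimilar f g N) :
    JSimilar (Lift f) (Lift g) N := by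
  rw [Colouring.jSimilar_iff_forall_cardAgreeBelow] at hsim ⊢
  intro P
  exact (Colouring.CardAgreeBelow.pi_choices hN hsim P.1 P.2).congr
    (Colouring.liftFiberEquiv f P).symm (Colouring.liftFiberEquiv g P).symm

/-- Similarity is preserved by lifting: if `f` and `g` are `N`-similar with `N ≥ 2`,
then the lifted colourings on the power sets are `N`-similar. -/
theorem stmt11 {X Y C : Type*} [Finite C] (f : X → C) (g : Y → C) (N : ℕ)
    (hN : 2 ≤ N) (hsim : JSimilar f g N) :
    JSimilar (Lift f) (Lift g) N :=
  stmt11_general f g N hN hsim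
end

section
/- Every finite binary structure embeds into every model of TST with infinite bottom type at level 0: if (A, R) is a finite set with a binary relation R, and N is a model of TSTI, then there exist injective maps h₀ : A → N_0 and h₁ : A → N_1 such that for all a, b ∈ A, R(a,b) if and only if N ⊨ h₀(a) ∈₀ h₁(b). -/
/-- A model of TST: domains `D n` for each type, membership relations between
consecutive types, satisfying extensionality and comprehension. -/
structure TSTModel where
  D : ℕ → Type
  mem : ∀ n, D n → D (n + 1) → Prop
  ext : ∀ n (y z : D (n + 1)), (∀ x, mem n x y ↔ mem n x z) → y = z
  comp : ∀ n (φ : D n → Prop), ∃ y : D (n + 1), ∀ x, mem n x y ↔ φ x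

/-- Every finite binary structure `(A, R)` embeds into every model of TST with infinite
bottom type: there are injections `h₀ : A → N_0` and `h₁ : A → N_1` such that
`R a b` iff `N ⊨ h₀ a ∈₀ h₁ b`. -/
theorem stmt12 (A : Type) [Fintype A] (R : A → A → Prop)
    (N : TSTModel) (hInf : Infinite (N.D 0)) :
    ∃ (h₀ : A → N.D 0) (h₁ : A → N.D 1),
      Function.Injective h₀ ∧ Function.Injective h₁ ∧
      ∀ a b : A, R a b ↔ N.mem 0 (h₀ a) (h₁ b) := by
  classical
  -- embed A ⊕ A into N.D 0
  obtain ⟨g⟩ : Nonempty (A ⊕ A ↪ N.D 0) := by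
    exact ⟨((Fintype.equivFin (A ⊕ A)).toEmbedding.trans Fin.valEmbedding).trans
      (Infinite.natEmbedding (N.D 0))⟩
  set h₀ : A → N.D 0 := fun a => g (Sum.inl a) with hh₀
  set m : A → N.D 0 := fun a => g (Sum.inr a) with hm
  have hne : ∀ a b : A, h₀ a ≠ m b := fun a b h => by
    have := g.injective h; simp at this
  choose h₁ hh₁ using fun b : A =>
    N.comp 0 (fun x => (∃ a, R a b ∧ x = h₀ a) ∨ x = m b)
  refine ⟨h₀, h₁, ?_, ?_, ?_⟩
  · intro a b h
    have := g.injective h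
    simpa using this
  · intro b b' h
    have hmem : N.mem 0 (m b) (h₁ b) := (hh₁ b (m b)).mpr (Or.inr rfl)
    rw [h] at hmem
    rcases (hh₁ b' (m b)).mp hmem with ⟨a, _, ha⟩ | ha
    · exact absurd ha.symm (hne a b)
    · have := g.injective ha
      simpa using this
  · intro a b
    constructor
    · intro hr
      exact (hh₁ b (h₀ a)).mpr (Or.inl ⟨a, hr, rfl⟩)
    · intro hmem
      rcases (hh₁ b (h₀ a)).mp hmem with ⟨a', hr, ha⟩ | ha
      · have := g.injective ha
        simp at this
        rwa [this]
      · exact absurd ha (hne a b)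
end

section
/- Let N be a model of TSTI and let M be the finitely generated model of TST on m atoms, where m ≥ G_k(r) and a₁, ..., a_k are elements of N of types r₁ ≤ ... ≤ r_k = r. Then there exists a sequence of injections f_n : M_n → N_n such that (i) for all x ∈ M_n and y ∈ M_{n+1}, M ⊨ x ∈_n y iff N ⊨ f_n(x) ∈_n f_{n+1}(y), and (ii) each a_j lies in the range of f_{r_j}. -/
/-- The iterated power set: `IterP X 0 = X`, `IterP X (n+1) = P(IterP X n)`. -/
def IterP (X : Type) : ℕ → Type
  | 0 => X
  | n + 1 => Set (IterP X n)

/-- The recursion `G_k(0) = k`, `G_k(n+1) = C(G_k(n), 2) + k`. -/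
def Gk (k : ℕ) : ℕ → ℕ
  | 0 => k
  | n + 1 => Nat.choose (Gk k n) 2 + k

/-!
Call a finite family `T n ⊆ N_n` *separated* if any two distinct members of `T (n+1)` are told
apart, in `N`, by some member of `T n`; extensionality provides such separators, at most
`C(|S|, 2)` of them for a set `S`. Closing the `k` given elements downwards under separators
from type `r` yields a separated family with at most `G_k(r)` elements at type `0`.
Map the atoms injectively onto a set of type-`0` elements containing that family, using that
`N_0` is infinite, and send `y ∈ M_{n+1}` to a member of `T (n+1)` whose extension over the
image of `M_n` is the image of `y` if there is one, and to a set given by comprehension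
otherwise. Separation makes this choice unique, so every member of `T (n+1)` is reached.
-/

open Function Set

theorem Finset.exists_card_le_forall_exists {α β : Type*} (S : Finset α) {P : α → β → Prop}
    (h : ∀ a ∈ S, ∃ b, P a b) :
    ∃ V : Finset β, V.card ≤ S.card ∧ ∀ a ∈ S, ∃ b ∈ V, P a b := by
  classical
  choose g hg using h
  exact ⟨S.attach.image fun a : S => g a a.2, Finset.card_image_le.trans_eq S.card_attach,
    fun a ha => ⟨g a ha, Finset.mem_image_of_mem _ (S.mem_attach ⟨a, ha⟩), hg a ha⟩⟩

theorem Finset.exists_injective_range_superset {X β : Type*} [Fintype X] [Infinite β]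
    (S : Finset β) (hS : S.card ≤ Fintype.card X) :
    ∃ f : X → β, Injective f ∧ ↑S ⊆ Set.range f := by
  obtain ⟨S', hSS', hS'⟩ := Infinite.exists_superset_card_eq S (Fintype.card X) hS
  let e : X ≃ S' := Fintype.equivOfCardEq (by simp [hS'])
  refine ⟨Subtype.val ∘ e, Subtype.val_injective.comp e.injective, fun t ht => ?_⟩
  exact ⟨e.symm ⟨t, hSS' ht⟩, by simp⟩

open Classical in
noncomputable def fiberFinset {ι : Type*} [Fintype ι] {D : ℕ → Type*} (r : ι → ℕ)
    (a : ∀ j, D (r j)) (n : ℕ) : Finset (D n) :=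
  Finset.univ.image fun j : {j // r j = n} => j.2 ▸ a j

theorem card_fiberFinset_le {ι : Type*} [Fintype ι] {D : ℕ → Type*} (r : ι → ℕ)
    (a : ∀ j, D (r j)) (n : ℕ) : (fiberFinset r a n).card ≤ Fintype.card ι := by
  classical
  exact Finset.card_image_le.trans (Fintype.card_subtype_le _)

theorem mem_fiberFinset {ι : Type*} [Fintype ι] {D : ℕ → Type*} (r : ι → ℕ)
    (a : ∀ j, D (r j)) (j : ι) : a j ∈ fiberFinset r a (r j) := by
  classical
  exact Finset.mem_image.mpr ⟨⟨j, rfl⟩, Finset.mem_univ _, rfl⟩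

namespace TSTModel

variable (N : TSTModel)

def Separates {n : ℕ} (U : Set (N.D n)) (S : Set (N.D (n + 1))) : Prop :=
  ∀ t ∈ S, ∀ t' ∈ S, t ≠ t' → ∃ s ∈ U, ¬(N.mem n s t ↔ N.mem n s t')

variable {N}

theorem Separates.mono {n : ℕ} {U U' : Set (N.D n)} {S : Set (N.D (n + 1))}
    (h : N.Separates U S) (hU : U ⊆ U') : N.Separates U' S := fun t ht t' ht' hne =>
  let ⟨s, hs, hsep⟩ := h t ht t' ht' hne
  ⟨s, hU hs, hsep⟩

theorem exists_separator {n : ℕ} {t t' : N.D (n + 1)} (hne : t ≠ t') :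
    ∃ s, ¬(N.mem n s t ↔ N.mem n s t') := by
  by_contra! h
  exact hne (N.ext n t t' h)

theorem exists_separating_finset {n : ℕ} (S : Finset (N.D (n + 1))) :
    ∃ U : Finset (N.D n), U.card ≤ S.card.choose 2 ∧
      N.Separates (U : Set (N.D n)) (S : Set (N.D (n + 1))) := by
  classical
  have hpair : ∀ p ∈ S.powersetCard 2, ∃ s,
      ∀ t ∈ p, ∀ t' ∈ p, t ≠ t' → ¬(N.mem n s t ↔ N.mem n s t') := by
    intro p hp
    obtain ⟨u, u', hne, rfl⟩ := Finset.card_eq_two.mp (Finset.mem_powersetCard.mp hp).2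
    obtain ⟨s, hs⟩ := exists_separator hne
    refine ⟨s, ?_⟩
    simp only [Finset.mem_insert, Finset.mem_singleton]
    rintro t (rfl | rfl) t' (rfl | rfl) htt' <;> first | exact absurd rfl htt' | tauto
  obtain ⟨U, hU, hUsep⟩ := (S.powersetCard 2).exists_card_le_forall_exists hpair
  refine ⟨U, by simpa [Finset.card_powersetCard] using hU, fun t ht t' ht' hne => ?_⟩
  have hp : {t, t'} ∈ S.powersetCard 2 := Finset.mem_powersetCard.mpr
    ⟨Finset.insert_subset_iff.mpr ⟨ht, Finset.singleton_subset_iff.mpr ht'⟩,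
      Finset.card_pair hne⟩
  obtain ⟨s, hsU, hs⟩ := hUsep _ hp
  exact ⟨s, hsU, hs t (by simp) t' (by simp) hne⟩

noncomputable def separators {n : ℕ} (S : Finset (N.D (n + 1))) : Finset (N.D n) :=
  (exists_separating_finset S).choose

theorem card_separators_le {n : ℕ} (S : Finset (N.D (n + 1))) :
    (separators S).card ≤ S.card.choose 2 :=
  (exists_separating_finset S).choose_spec.1

theorem separates_separators {n : ℕ} (S : Finset (N.D (n + 1))) :
    N.Separates (separators S : Set (N.D n)) (S : Set (N.D (n + 1))) :=
  (exists_separating_finset S).choose_spec.2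

open Classical in
/-- What is reachable from `A` in fewer than `d` steps from a type to separators one type down. -/
noncomputable def sepClosure (A : ∀ n, Finset (N.D n)) : ℕ → ∀ n, Finset (N.D n)
  | 0 => fun _ => ∅
  | d + 1 => fun n => A n ∪ separators (sepClosure A d (n + 1))

theorem card_sepClosure_succ_le {k : ℕ} {A : ∀ n, Finset (N.D n)} (hA : ∀ n, (A n).card ≤ k)
    (d n : ℕ) : (sepClosure A (d + 1) n).card ≤ k + (sepClosure A d (n + 1)).card.choose 2 := by
  classical
  exact (Finset.card_union_le _ _).trans (add_le_add (hA n) (card_separators_le _))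

theorem card_sepClosure_le {k : ℕ} {A : ∀ n, Finset (N.D n)} (hA : ∀ n, (A n).card ≤ k)
    (d n : ℕ) : (sepClosure A (d + 1) n).card ≤ Gk k d := by
  induction d generalizing n with
  | zero => simpa [sepClosure, Gk] using card_sepClosure_succ_le hA 0 n
  | succ d ih =>
    calc (sepClosure A (d + 2) n).card
        ≤ k + (sepClosure A (d + 1) (n + 1)).card.choose 2 := card_sepClosure_succ_le hA _ n
      _ ≤ k + (Gk k d).choose 2 := by gcongr; exact ih (n + 1)
      _ = Gk k (d + 1) := by rw [Gk, add_comm]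

/-- The separator closure of `A` started at type `m`; it is empty above `m`. -/
noncomputable def levelClosure (A : ∀ n, Finset (N.D n)) (m n : ℕ) : Finset (N.D n) :=
  sepClosure A (m + 1 - n) n

theorem card_levelClosure_zero_le {k : ℕ} {A : ∀ n, Finset (N.D n)}
    (hA : ∀ n, (A n).card ≤ k) (m : ℕ) : (levelClosure A m 0).card ≤ Gk k m :=
  card_sepClosure_le hA m 0

theorem subset_levelClosure (A : ∀ n, Finset (N.D n)) {m n : ℕ} (h : n ≤ m) :
    A n ⊆ levelClosure A m n := by
  classical
  rw [levelClosure, show m + 1 - n = (m - n) + 1 by omega, sepClosure]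
  exact Finset.subset_union_left

theorem separates_levelClosure (A : ∀ n, Finset (N.D n)) (m n : ℕ) :
    N.Separates (levelClosure A m n : Set (N.D n))
      (levelClosure A m (n + 1) : Set (N.D (n + 1))) := by
  classical
  rcases le_or_gt n m with h | h
  · rw [levelClosure, levelClosure, show m + 1 - n = (m - n) + 1 by omega,
      show m + 1 - (n + 1) = m - n by omega, sepClosure]
    exact (separates_separators _).mono (Finset.coe_subset.mpr Finset.subset_union_right)
  · unfold levelClosure
    rw [show m + 1 - (n + 1) = 0 by omega, sepClosure]
    simp [Separates]

theorem exists_extension {A : Type} {n : ℕ} {g : A → N.D n} (hg : Injective g)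
    {T : Set (N.D (n + 1))} (hT : N.Separates (range g) T) :
    ∃ h : Set A → N.D (n + 1), (∀ x y, N.mem n (g x) (h y) ↔ x ∈ y) ∧
      T ⊆ range h := by
  classical
  let h : Set A → N.D (n + 1) := fun y =>
    if hy : ∃ t ∈ T, ∀ x, N.mem n (g x) t ↔ x ∈ y then hy.choose
    else (N.comp n fun s => ∃ x ∈ y, g x = s).choose
  have hmem : ∀ x y, N.mem n (g x) (h y) ↔ x ∈ y := by
    intro x y
    by_cases hy : ∃ t ∈ T, ∀ x, N.mem n (g x) t ↔ x ∈ y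
    · simp only [h, dif_pos hy]
      exact hy.choose_spec.2 x
    · simp only [h, dif_neg hy, (N.comp n _).choose_spec, hg.eq_iff, exists_eq_right]
  refine ⟨h, hmem, fun t ht => ⟨{x | N.mem n (g x) t}, ?_⟩⟩
  have hy : ∃ t' ∈ T, ∀ x, N.mem n (g x) t' ↔ x ∈ {x | N.mem n (g x) t} :=
    ⟨t, ht, fun _ => .rfl⟩
  obtain ⟨ht', hext⟩ := hy.choose_spec
  simp only [h, dif_pos hy]
  -- a separator in the image of `g` would distinguish the chosen element from `t`
  by_contra hne
  obtain ⟨_, ⟨x, rfl⟩, hsep⟩ := hT _ ht' t ht hne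
  exact hsep (hext x)

theorem injective_of_mem_iff {A : Type} {n : ℕ} {g : A → N.D n} {h : Set A → N.D (n + 1)}
    (hmem : ∀ x y, N.mem n (g x) (h y) ↔ x ∈ y) : Injective h := fun y z hyz =>
  Set.ext fun x => by rw [← hmem x y, ← hmem x z, hyz]

theorem exists_embedding {X : Type} {T : ∀ n, Set (N.D n)}
    (hT : ∀ n, N.Separates (T n) (T (n + 1))) {f₀ : X → N.D 0} (hf₀ : Injective f₀)
    (hT₀ : T 0 ⊆ range f₀) :
    ∃ f : ∀ n, IterP X n → N.D n, (∀ n, Injective (f n) ∧ T n ⊆ range (f n)) ∧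
      ∀ (n : ℕ) (x : IterP X n) (y : IterP X (n + 1)),
        x ∈ (show Set (IterP X n) from y) ↔ N.mem n (f n x) (f (n + 1) y) := by
  let Good n := {g : IterP X n → N.D n // Injective g ∧ T n ⊆ range g}
  have step : ∀ n (g : Good n), ∃ h : Good (n + 1),
      ∀ x y, N.mem n (g.1 x) (h.1 y) ↔ x ∈ (show Set (IterP X n) from y) := by
    rintro n ⟨g, hg, hTg⟩
    obtain ⟨h, hmem, hTh⟩ := exists_extension hg ((hT n).mono hTg)
    exact ⟨⟨h, injective_of_mem_iff hmem, hTh⟩, hmem⟩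
  choose next hnext using step
  let F : ∀ n, Good n := fun n => Nat.rec (motive := Good) ⟨f₀, hf₀, hT₀⟩ next n
  exact ⟨fun n => (F n).1, fun n => (F n).2, fun n x y => (hnext n (F n) x y).symm⟩

end TSTModel

theorem stmt13_general (N : TSTModel) (hInf : Infinite (N.D 0)) (X : Type) [Fintype X]
    (k : ℕ) (r : Fin k → ℕ) (rmax : ℕ) (hr : ∀ j, r j ≤ rmax)
    (a : ∀ j : Fin k, N.D (r j)) (hcard : Gk k rmax ≤ Fintype.card X) :
    ∃ f : ∀ n, IterP X n → N.D n,
      (∀ n, Function.Injective (f n)) ∧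
      (∀ (n : ℕ) (x : IterP X n) (y : IterP X (n + 1)),
        x ∈ (show Set (IterP X n) from y) ↔ N.mem n (f n x) (f (n + 1) y)) ∧
      (∀ j : Fin k, ∃ x : IterP X (r j), f (r j) x = a j) := by
  let T := TSTModel.levelClosure (fiberFinset r a) rmax
  have hfiber : ∀ n, (fiberFinset r a n).card ≤ k := fun n =>
    (card_fiberFinset_le r a n).trans_eq (Fintype.card_fin k)
  obtain ⟨f₀, hf₀, hf₀T⟩ := (T 0).exists_injective_range_superset
    ((TSTModel.card_levelClosure_zero_le hfiber rmax).trans hcard)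
  obtain ⟨f, hf, hmem⟩ := TSTModel.exists_embedding
    (fun n => TSTModel.separates_levelClosure _ rmax n) hf₀ hf₀T
  refine ⟨f, fun n => (hf n).1, hmem, fun j => ?_⟩
  exact (hf (r j)).2 (TSTModel.subset_levelClosure _ (hr j) (mem_fiberFinset r a j))

/-- Embedding lemma: if `N` is a model of TSTI, `a j ∈ N` are elements of types
`r 1 ≤ ... ≤ r k ≤ rmax`, and `M` is the finitely generated model of TST on at least
`G_k(rmax)` atoms, then `M` embeds into `N` (levelwise injectively, preserving and
reflecting membership) with every `a j` in the range. -/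
theorem stmt13 (N : TSTModel) (hInf : Infinite (N.D 0)) (X : Type) [Fintype X]
    (k : ℕ) (r : Fin k → ℕ) (hmono : Monotone r) (rmax : ℕ) (hr : ∀ j, r j ≤ rmax)
    (a : ∀ j : Fin k, N.D (r j)) (hcard : Gk k rmax ≤ Fintype.card X) :
    ∃ f : ∀ n, IterP X n → N.D n,
      (∀ n, Function.Injective (f n)) ∧
      (∀ (n : ℕ) (x : IterP X n) (y : IterP X (n + 1)),
        x ∈ (show Set (IterP X n) from y) ↔ N.mem n (f n x) (f (n + 1) y)) ∧
      (∀ j : Fin k, ∃ x : IterP X (r j), f (r j) x = a j) :=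
  stmt13_general N hInf X k r rmax hr a hcard
end

section
/- Let f : X → C and g : Y → C be J-similar colourings into a finite colour set C with J ≥ 1, let θ(z) be a propositional (quantifier-free) condition depending only on the colour of z, and suppose l < J. If there exist e₁, ..., e_l ∈ Y (not necessarily distinct) satisfying a conjunction of colour conditions and equality/inequality constraints among themselves, then there exist d₁, ..., d_l ∈ X with the same colours (f(d_i) = g(e_i)) and the same equality pattern (d_i = d_j iff e_i = e_j). -/
/-!
A colour class of fewer than `J` points of `Y` fits into the corresponding colour class of `X`:
either the `f`-class has some size `k < J`, and then the `g`-class has the same size `k`, or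
it has at least `J` points. Choosing an injection colour by colour and gluing gives the `d i`.
-/

open Set

section

variable {X Y C : Type*} {f : X → C} {g : Y → C}

theorem JSimilar.encard_le_encard_preimage {J : ℕ} (hsim : JSimilar f g J) {t : Set Y} {α : C}
    (ht : t ⊆ g ⁻¹' {α}) (htJ : t.encard < J) : t.encard ≤ (f ⁻¹' {α}).encard := by
  by_cases hfin : (f ⁻¹' {α}).Finite
  swap
  · simp [Set.Infinite.encard_eq hfin]
  by_cases hk : (f ⁻¹' {α}).ncard < J
  · obtain ⟨hgfin, hgcard⟩ := (hsim _ hk α).1 ⟨hfin, rfl⟩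
    calc t.encard ≤ (g ⁻¹' {α}).encard := encard_le_encard ht
      _ = (f ⁻¹' {α}).encard := by rw [← hgfin.cast_ncard_eq, ← hfin.cast_ncard_eq, hgcard]
  · calc t.encard ≤ J := htJ.le
      _ ≤ (f ⁻¹' {α}).encard := by rw [← hfin.cast_ncard_eq]; exact_mod_cast not_lt.1 hk

theorem exists_injOn_comp_eq_of_encard_inter_preimage_le [Nonempty X] {s : Set Y} (hs : s.Finite)
    (h : ∀ α, (s ∩ g ⁻¹' {α}).encard ≤ (f ⁻¹' {α}).encard) :
    ∃ φ : Y → X, InjOn φ s ∧ ∀ y ∈ s, f (φ y) = g y := by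
  choose φ hmaps hinj using fun α ↦ (hs.inter_of_left (g ⁻¹' {α})).exists_injOn_of_encard_le (h α)
  have hcol : ∀ y ∈ s, f (φ (g y) y) = g y := fun y hy ↦ hmaps (g y) ⟨hy, rfl⟩
  refine ⟨fun y ↦ φ (g y) y, fun y hy y' hy' hyy' ↦ ?_, hcol⟩
  have hg : g y = g y' := by rw [← hcol y hy, ← hcol y' hy']; exact congrArg f hyy'
  simp only [hg] at hyy'
  exact hinj (g y') ⟨hy, hg⟩ ⟨hy', rfl⟩ hyy'

theorem exists_comp_eq_of_encard_inter_preimage_le {ι : Type*} [Finite ι] (e : ι → Y)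
    (h : ∀ α, (range e ∩ g ⁻¹' {α}).encard ≤ (f ⁻¹' {α}).encard) :
    ∃ d : ι → X, (∀ i, f (d i) = g (e i)) ∧ ∀ i j, d i = d j ↔ e i = e j := by
  cases isEmpty_or_nonempty ι
  · exact ⟨isEmptyElim, isEmptyElim, isEmptyElim⟩
  obtain ⟨i⟩ := ‹Nonempty ι›
  have : Nonempty X := by
    have hpos : 0 < (range e ∩ g ⁻¹' {g (e i)}).encard := encard_pos.2 ⟨e i, mem_range_self i, rfl⟩
    obtain ⟨x, -⟩ := encard_pos.1 (hpos.trans_le (h (g (e i))))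
    exact ⟨x⟩
  obtain ⟨φ, hinj, hcol⟩ := exists_injOn_comp_eq_of_encard_inter_preimage_le (finite_range e) h
  exact ⟨φ ∘ e, fun i ↦ hcol _ (mem_range_self i),
    fun i j ↦ hinj.eq_iff (mem_range_self i) (mem_range_self j)⟩

end

theorem stmt17_general {X Y C : Type*} (f : X → C) (g : Y → C) (J l : ℕ)
    (hsim : JSimilar f g J) (hl : l < J) (e : Fin l → Y) :
    ∃ d : Fin l → X, (∀ i, f (d i) = g (e i)) ∧
      ∀ i j, d i = d j ↔ e i = e j := by
  refine exists_comp_eq_of_encard_inter_preimage_le e fun α ↦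
    hsim.encard_le_encard_preimage inter_subset_right ?_
  calc (range e ∩ g ⁻¹' {α}).encard ≤ (range e).encard := encard_le_encard inter_subset_left
    _ ≤ l := by simpa using encard_image_le e univ
    _ < J := by exact_mod_cast hl

/-- Transfer step: if `f` and `g` are `J`-similar with `1 ≤ J` and `l < J`, then for any
`l` elements of `Y` (not necessarily distinct) there are `l` elements of `X` with
matching colours and the same pattern of equalities. -/
theorem stmt17 {X Y C : Type*} [Finite C] (f : X → C) (g : Y → C) (J l : ℕ)
    (hJ : 1 ≤ J) (hsim : JSimilar f g J) (hl : l < J) (e : Fin l → Y) :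
    ∃ d : Fin l → X, (∀ i, f (d i) = g (e i)) ∧
      ∀ i j, d i = d j ↔ e i = e j :=
  stmt17_general f g J l hsim hl e
end
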